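/- arXiv:1109.2563 — 2 statements merged into one kernel-verified Lean document; each statement's English description precedes it below -/
import Mathlib

section
/- The equality function EQ : {0,1}^n × {0,1}^n → {0,1}, EQ(x,y) = 1 if and only if x = y, has garden-hose complexity at least n: GH(EQ) ≥ n. -/
/-- A partial matching on the vertex type `V`, encoded by a partner function:
`m i = some j` means that there is an edge between `i` and `j`;
the graph `{ {i,j} | m i = some j }` then has maximum degree at most `1`
and no self-loops. -/
def IsPartialMatching {V : Type*} (m : V → Option V) : Prop :=
  ∀ i j, m i = some j → i ≠ j ∧ m j = some i

/-- The position of the water in a garden-hose game with `s` pipes: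
`atAlice i` (resp. `atBob i`) means the water has just arrived at Alice's
(resp. Bob's) end of pipe `i`; `exitA` / `exitB` mean the water has exited
on Alice's / Bob's side, i.e. the maximal path starting at the tap has ended
in `A∘` / in `B`. -/
inductive GHState (s : ℕ) where
  | atAlice : Fin s → GHState s
  | atBob : Fin s → GHState s
  | exitA : GHState s
  | exitB : GHState s
  deriving DecidableEq

/-- Vertex `k` of `A∘ = {0, 1, ..., s}` viewed as a pipe: vertex `0` is the water
tap (no pipe), and vertex `i + 1` is Alice's end of pipe `i`. -/
def toPipe {s : ℕ} (k : Fin (s + 1)) : Option (Fin s) :=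
  if h : (k : ℕ) = 0 then none
  else some ⟨(k : ℕ) - 1, by have := k.isLt; omega⟩

/-- One step of the water flow, given Alice's connections `a` on `A∘ = {0,...,s}`
and Bob's connections `b` on `B = {1,...,s}` (indexed by pipes `Fin s`). -/
def ghStep {s : ℕ} (a : Fin (s + 1) → Option (Fin (s + 1)))
    (b : Fin s → Option (Fin s)) : GHState s → GHState s
  | GHState.atAlice i =>
    match a i.succ with
    | none => GHState.exitA
    | some k =>
      match toPipe k with
      | none => GHState.exitA
      | some p => GHState.atBob p
  | GHState.atBob i =>
    match b i with
    | none => GHState.exitB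
    | some j => GHState.atAlice j
  | GHState.exitA => GHState.exitA
  | GHState.exitB => GHState.exitB

/-- The start of the water flow: the tap (vertex `0` of `A∘`) is connected by
Alice to at most one pipe. -/
def ghStart {s : ℕ} (a : Fin (s + 1) → Option (Fin (s + 1))) : GHState s :=
  match a 0 with
  | none => GHState.exitA
  | some k =>
    match toPipe k with
    | none => GHState.exitA
    | some p => GHState.atBob p

/-- The endpoint of the maximal path `π(x,y)` starting at the tap: since the graph
has maximum degree `2` and the path is simple, it is reached after at most
`2s + 2` steps. -/
def ghResult {s : ℕ} (a : Fin (s + 1) → Option (Fin (s + 1)))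
    (b : Fin s → Option (Fin s)) : GHState s :=
  (ghStep a b)^[2 * s + 2] (ghStart a)

/-- A garden-hose game of size `s` on inputs `{0,1}^n × {0,1}^n`: for every input
`x` Alice chooses a partial matching `EA x` on `A∘ = {0,1,…,s}` and for every
input `y` Bob chooses a partial matching `EB y` on `B = {1,…,s}`. -/
structure GHGame (n s : ℕ) where
  EA : (Fin n → Bool) → Fin (s + 1) → Option (Fin (s + 1))
  EB : (Fin n → Bool) → Fin s → Option (Fin s)
  matchA : ∀ x, IsPartialMatching (EA x)
  matchB : ∀ y, IsPartialMatching (EB y)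

/-- Where the water exits on input `(x, y)`. -/
def GHGame.run {n s : ℕ} (G : GHGame n s) (x y : Fin n → Bool) : GHState s :=
  ghResult (G.EA x) (G.EB y)

/-- The game `G` computes `f` if for all inputs the maximal path from the tap ends
in `A∘` whenever `f x y = 0` (water exits on Alice's side) and in `B` whenever
`f x y = 1` (water exits on Bob's side). -/
def GHGame.Computes {n s : ℕ} (G : GHGame n s)
    (f : (Fin n → Bool) → (Fin n → Bool) → Bool) : Prop :=
  ∀ x y, G.run x y = if f x y then GHState.exitB else GHState.exitA

/-- The garden-hose complexity of `f`: the minimal number of pipes of a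
garden-hose game computing `f`. -/
noncomputable def GH {n : ℕ} (f : (Fin n → Bool) → (Fin n → Bool) → Bool) : ℕ :=
  sInf {s : ℕ | ∃ G : GHGame n s, G.Computes f}

/-- The equality function: `EQ x y = 1` iff `x = y`. -/
def EQfun (n : ℕ) (x y : Fin n → Bool) : Bool := decide (x = y)

section GHAux

open GHState

variable {s : ℕ}

lemma toPipe_succ (p : Fin s) : toPipe p.succ = some p := by
  have h1 : ((p.succ : Fin (s+1)) : ℕ) = (p : ℕ) + 1 := Fin.val_succ p
  unfold toPipe
  rw [dif_neg (by omega)]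
  simp only [Option.some.injEq]
  apply Fin.ext
  simp [h1]

lemma toPipe_zero : toPipe (0 : Fin (s + 1)) = none := by
  simp [toPipe]

lemma toPipe_eq_some {k : Fin (s + 1)} {p : Fin s} (h : toPipe k = some p) : k = p.succ := by
  unfold toPipe at h
  by_cases hk : (k : ℕ) = 0
  · rw [dif_pos hk] at h; exact absurd h (by simp)
  · rw [dif_neg hk] at h
    have h2 : (k : ℕ) - 1 = (p : ℕ) := congrArg Fin.val (Option.some.inj h)
    apply Fin.ext
    rw [Fin.val_succ]
    omega

variable (a : Fin (s + 1) → Option (Fin (s + 1))) (b : Fin s → Option (Fin s))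

lemma step_atAlice_none {i : Fin s} (h : a i.succ = none) :
    ghStep a b (GHState.atAlice i) = GHState.exitA := by
  simp [ghStep, h]

lemma step_atAlice_some {i q : Fin s} (h : a i.succ = some q.succ) :
    ghStep a b (GHState.atAlice i) = GHState.atBob q := by
  simp [ghStep, h, toPipe_succ]

lemma step_atAlice_zero {i : Fin s} (h : a i.succ = some 0) :
    ghStep a b (GHState.atAlice i) = GHState.exitA := by
  simp [ghStep, h, toPipe_zero]

lemma step_atBob_none {i : Fin s} (h : b i = none) :
    ghStep a b (GHState.atBob i) = GHState.exitB := by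
  simp [ghStep, h]

lemma step_atBob_some {i j : Fin s} (h : b i = some j) :
    ghStep a b (GHState.atBob i) = GHState.atAlice j := by
  simp [ghStep, h]

lemma step_exitA : ghStep a b GHState.exitA = GHState.exitA := rfl
lemma step_exitB : ghStep a b GHState.exitB = GHState.exitB := rfl

lemma ghStart_none (h : a 0 = none) : ghStart a = GHState.exitA := by
  simp [ghStart, h]

lemma ghStart_some {p : Fin s} (h : a 0 = some p.succ) : ghStart a = GHState.atBob p := by
  simp [ghStart, h, toPipe_succ]

lemma ghStart_zero (h : a 0 = some 0) : ghStart a = GHState.exitA := by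
  simp [ghStart, h, toPipe_zero]

lemma ghStart_ne_atAlice (p : Fin s) : ghStart a ≠ GHState.atAlice p := by
  cases h : a 0 with
  | none => rw [ghStart_none a h]; simp
  | some k =>
    induction k using Fin.cases with
    | zero => rw [ghStart_zero a h]; simp
    | succ q => rw [ghStart_some a h]; simp

lemma ghStart_eq_atBob {p : Fin s} (h : ghStart a = GHState.atBob p) : a 0 = some p.succ := by
  cases h0 : a 0 with
  | none => rw [ghStart_none a h0] at h; exact absurd h (by simp)
  | some k =>
    induction k using Fin.cases with
    | zero => rw [ghStart_zero a h0] at h; exact absurd h (by simp)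
    | succ q =>
      rw [ghStart_some a h0] at h
      have : q = p := by injection h
      rw [this]

lemma step_eq_atBob {z : GHState s} {q : Fin s} (h : ghStep a b z = GHState.atBob q) :
    ∃ i, z = GHState.atAlice i ∧ a i.succ = some q.succ := by
  cases z with
  | atAlice i =>
    refine ⟨i, rfl, ?_⟩
    cases ha : a i.succ with
    | none => rw [step_atAlice_none a b ha] at h; exact absurd h (by simp)
    | some k =>
      induction k using Fin.cases with
      | zero => rw [step_atAlice_zero a b ha] at h; exact absurd h (by simp)
      | succ q' =>
        rw [step_atAlice_some a b ha] at h
        have : q' = q := by injection h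
        rw [this]
  | atBob i =>
    cases hb : b i with
    | none => rw [step_atBob_none a b hb] at h; exact absurd h (by simp)
    | some j => rw [step_atBob_some a b hb] at h; exact absurd h (by simp)
  | exitA => exact absurd h (by simp [ghStep])
  | exitB => exact absurd h (by simp [ghStep])

lemma step_eq_atAlice {z : GHState s} {j : Fin s} (h : ghStep a b z = GHState.atAlice j) :
    ∃ i, z = GHState.atBob i ∧ b i = some j := by
  cases z with
  | atAlice i =>
    cases ha : a i.succ with
    | none => rw [step_atAlice_none a b ha] at h; exact absurd h (by simp)
    | some k =>
      induction k using Fin.cases with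
      | zero => rw [step_atAlice_zero a b ha] at h; exact absurd h (by simp)
      | succ q' => rw [step_atAlice_some a b ha] at h; exact absurd h (by simp)
  | atBob i =>
    refine ⟨i, rfl, ?_⟩
    cases hb : b i with
    | none => rw [step_atBob_none a b hb] at h; exact absurd h (by simp)
    | some j' =>
      rw [step_atBob_some a b hb] at h
      have : j' = j := by injection h
      rw [this]
  | exitA => exact absurd h (by simp [ghStep])
  | exitB => exact absurd h (by simp [ghStep])

end GHAux
section GHTraj

open GHState

variable {s : ℕ} (a : Fin (s + 1) → Option (Fin (s + 1))) (b : Fin s → Option (Fin s))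

lemma iterate_exitA (m : ℕ) : (ghStep a b)^[m] GHState.exitA = GHState.exitA :=
  Function.iterate_fixed rfl m

lemma iterate_exitB (m : ℕ) : (ghStep a b)^[m] GHState.exitB = GHState.exitB :=
  Function.iterate_fixed rfl m

lemma traj_absorbA {k m : ℕ} (hk : k ≤ m)
    (h : (ghStep a b)^[k] (ghStart a) = GHState.exitA) :
    (ghStep a b)^[m] (ghStart a) = GHState.exitA := by
  have : m = (m - k) + k := by omega
  rw [this, Function.iterate_add_apply, h, iterate_exitA]

lemma no_exitA {N k : ℕ} (hN : (ghStep a b)^[N] (ghStart a) = GHState.exitB)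
    (hk : k ≤ N) : (ghStep a b)^[k] (ghStart a) ≠ GHState.exitA := by
  intro h
  rw [traj_absorbA a b hk h] at hN
  exact absurd hN (by simp)

/-- Combined simplicity: the trajectory never visits the same pipe twice
(in either direction). -/
lemma no_conflict (ha : IsPartialMatching a) (hb : IsPartialMatching b) :
    ∀ j i, i < j → ∀ p : Fin s,
      ((ghStep a b)^[j] (ghStart a) = GHState.atAlice p ∨
       (ghStep a b)^[j] (ghStart a) = GHState.atBob p) →
      ((ghStep a b)^[i] (ghStart a) = GHState.atAlice p ∨
       (ghStep a b)^[i] (ghStart a) = GHState.atBob p) → False := by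
  intro j
  induction j using Nat.strong_induction_on with
  | _ j IH =>
    intro i hij p hj hi
    obtain ⟨j', rfl⟩ : ∃ j'', j = j'' + 1 := ⟨j - 1, by omega⟩
    rw [Function.iterate_succ_apply'] at hj
    cases hj with
    | inl hjA =>
      -- predecessor of atAlice p is atBob q with b q = some p
      obtain ⟨q, hq1, hq2⟩ := step_eq_atAlice a b hjA
      have hbp : b p = some q := (hb q p hq2).2
      cases hi with
      | inl hiA =>
        -- traj i = atAlice p
        rcases Nat.eq_zero_or_pos i with rfl | hipos
        · exact ghStart_ne_atAlice a p hiA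
        · obtain ⟨i', rfl⟩ : ∃ i'', i = i'' + 1 := ⟨i - 1, by omega⟩
          rw [Function.iterate_succ_apply'] at hiA
          obtain ⟨q', hq1', hq2'⟩ := step_eq_atAlice a b hiA
          have : q' = q := by
            have h1 := (hb q' p hq2').2
            rw [hbp] at h1; injection h1 with h1; exact h1.symm
          rw [this] at hq1'
          exact IH j' (by omega) i' (by omega) q (Or.inr hq1) (Or.inr hq1')
      | inr hiB =>
        -- traj i = atBob p, so traj (i+1) = atAlice q
        have hiA1 : (ghStep a b)^[i+1] (ghStart a) = GHState.atAlice q := by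
          rw [Function.iterate_succ_apply', hiB]
          exact step_atBob_some a b hbp
        rcases (by omega : i = j' ∨ i + 1 = j' ∨ i + 1 < j') with rfl | heq | hlt
        · -- traj j' = atBob q and traj i = atBob p ⇒ p = q ⇒ self-loop
          rw [hiB] at hq1
          have : p = q := by simpa using hq1
          rw [← this] at hbp
          exact (hb p p hbp).1 rfl
        · rw [heq] at hiA1
          rw [hiA1] at hq1
          exact absurd hq1 (by simp)
        · exact IH j' (by omega) (i+1) hlt q (Or.inr hq1) (Or.inl hiA1)
    | inr hjB =>
      -- predecessor of atBob p is atAlice m with a m.succ = some p.succ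
      obtain ⟨m, hm1, hm2⟩ := step_eq_atBob a b hjB
      have hap : a p.succ = some m.succ := (ha m.succ p.succ hm2).2
      cases hi with
      | inr hiB =>
        rcases Nat.eq_zero_or_pos i with rfl | hipos
        · -- traj 0 = ghStart a = atBob p
          have h0 : a 0 = some p.succ := ghStart_eq_atBob a hiB
          have h1 := (ha 0 p.succ h0).2
          rw [hap] at h1
          exact Fin.succ_ne_zero m (by simpa using h1)
        · obtain ⟨i', rfl⟩ : ∃ i'', i = i'' + 1 := ⟨i - 1, by omega⟩
          rw [Function.iterate_succ_apply'] at hiB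
          obtain ⟨m', hm1', hm2'⟩ := step_eq_atBob a b hiB
          have : m' = m := by
            have h1 := (ha m'.succ p.succ hm2').2
            rw [hap] at h1
            injection h1 with h1
            exact Fin.succ_injective _ h1.symm
          rw [this] at hm1'
          exact IH j' (by omega) i' (by omega) m (Or.inl hm1) (Or.inl hm1')
      | inl hiA =>
        -- traj i = atAlice p, so traj (i+1) = atBob m
        have hiB1 : (ghStep a b)^[i+1] (ghStart a) = GHState.atBob m := by
          rw [Function.iterate_succ_apply', hiA]
          exact step_atAlice_some a b hap
        rcases (by omega : i = j' ∨ i + 1 = j' ∨ i + 1 < j') with rfl | heq | hlt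
        · rw [hiA] at hm1
          have : m = p := by simpa using hm1.symm
          rw [this] at hap
          exact (ha p.succ p.succ hap).1 rfl
        · rw [heq] at hiB1
          rw [hiB1] at hm1
          exact absurd hm1 (by simp)
        · exact IH j' (by omega) (i+1) hlt m (Or.inl hm1) (Or.inr hiB1)

end GHTraj
section GHMain

open GHState

variable {s : ℕ}

open scoped Classical in
/-- The set of pipes visited by the trajectory. -/
noncomputable def usedPipes (a : Fin (s + 1) → Option (Fin (s + 1))) (b : Fin s → Option (Fin s)) :
    Finset (Fin s) :=
  Finset.univ.filter fun p => ∃ k ∈ Finset.range (2 * s + 3),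
    (ghStep a b)^[k] (ghStart a) = GHState.atAlice p ∨
    (ghStep a b)^[k] (ghStart a) = GHState.atBob p

lemma mem_usedPipes {a : Fin (s + 1) → Option (Fin (s + 1))} {b : Fin s → Option (Fin s)}
    {p : Fin s} :
    p ∈ usedPipes a b ↔ ∃ k < 2 * s + 3,
      (ghStep a b)^[k] (ghStart a) = GHState.atAlice p ∨
      (ghStep a b)^[k] (ghStart a) = GHState.atBob p := by
  classical
  simp [usedPipes]

lemma cross_ne_exitA (a a' : Fin (s + 1) → Option (Fin (s + 1)))
    (b b' : Fin s → Option (Fin s))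
    (ha : IsPartialMatching a) (hb' : IsPartialMatching b')
    (htN : (ghStep a b)^[2 * s + 2] (ghStart a) = GHState.exitB)
    (ht'N : (ghStep a' b')^[2 * s + 2] (ghStart a') = GHState.exitB)
    (hused : usedPipes a b = usedPipes a' b') :
    (ghStep a b')^[2 * s + 2] (ghStart a) ≠ GHState.exitA := by
  -- auxiliary: an Alice state of the cross run that uses a visited pipe continues safely
  have haveA : ∀ (r : Fin s) (k : ℕ),
      (ghStep a b')^[k + 1] (ghStart a) = GHState.atAlice r → r ∈ usedPipes a b →
      ∃ q, a r.succ = some q.succ ∧ q ∈ usedPipes a b := by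
    intro r k hu hr
    obtain ⟨j, hjN, hc⟩ := mem_usedPipes.mp hr
    cases hc with
    | inl hA =>
      have hjlt : j < 2 * s + 2 := by
        rcases Nat.lt_or_ge j (2 * s + 2) with h | h
        · exact h
        · exfalso
          have hj2 : j = 2 * s + 2 := by omega
          rw [hj2, htN] at hA
          exact absurd hA (by simp)
      cases ha2 : a r.succ with
      | none =>
        exfalso
        have : (ghStep a b)^[j + 1] (ghStart a) = GHState.exitA := by
          rw [Function.iterate_succ_apply', hA]
          exact step_atAlice_none a b ha2
        exact no_exitA a b htN (by omega) this
      | some kk =>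
        rcases Fin.eq_zero_or_eq_succ kk with rfl | ⟨q, rfl⟩
        · exfalso
          have : (ghStep a b)^[j + 1] (ghStart a) = GHState.exitA := by
            rw [Function.iterate_succ_apply', hA]
            exact step_atAlice_zero a b ha2
          exact no_exitA a b htN (by omega) this
        · refine ⟨q, rfl, mem_usedPipes.mpr ⟨j + 1, by omega, Or.inr ?_⟩⟩
          rw [Function.iterate_succ_apply', hA]
          exact step_atAlice_some a b ha2
    | inr hB =>
      rcases j with _ | j'
      · -- ghStart a = atBob r, conflicting with the cross run visiting atAlice r
        exfalso
        refine no_conflict a b' ha hb' (k + 1) 0 (by omega) r (Or.inl hu) (Or.inr ?_)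
        simpa using hB
      · rw [Function.iterate_succ_apply'] at hB
        obtain ⟨m, hm1, hm2⟩ := step_eq_atBob a b hB
        exact ⟨m, (ha _ _ hm2).2, mem_usedPipes.mpr ⟨j', by omega, Or.inl hm1⟩⟩
  have inv : ∀ k, (ghStep a b')^[k] (ghStart a) = GHState.exitB ∨
      (∃ p, (ghStep a b')^[k] (ghStart a) = GHState.atBob p ∧ p ∈ usedPipes a b) ∨
      (∃ p q, (ghStep a b')^[k] (ghStart a) = GHState.atAlice p ∧
        a p.succ = some q.succ ∧ q ∈ usedPipes a b) := by
    intro k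
    induction k with
    | zero =>
      cases h0 : a 0 with
      | none =>
        exfalso
        exact no_exitA a b htN (Nat.zero_le _) (by simpa using ghStart_none a h0)
      | some kk =>
        rcases Fin.eq_zero_or_eq_succ kk with rfl | ⟨p, rfl⟩
        · exfalso
          exact no_exitA a b htN (Nat.zero_le _) (by simpa using ghStart_zero a h0)
        · right; left
          refine ⟨p, by simpa using ghStart_some a h0, mem_usedPipes.mpr ⟨0, by omega, Or.inr ?_⟩⟩
          simpa using ghStart_some a h0
    | succ k ih =>
      rcases ih with hB | ⟨p, hp, hpm⟩ | ⟨p, q, hp, hq, hqm⟩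
      · left
        rw [Function.iterate_succ_apply', hB]
        exact step_exitB a b'
      · -- u k = atBob p with p visited
        have hpm' : p ∈ usedPipes a' b' := hused ▸ hpm
        obtain ⟨k', hk', hc⟩ := mem_usedPipes.mp hpm'
        cases hc with
        | inl hA' =>
          rcases k' with _ | k''
          · exact absurd (by simpa using hA') (ghStart_ne_atAlice a' p)
          · rw [Function.iterate_succ_apply'] at hA'
            obtain ⟨q0, hq01, hq02⟩ := step_eq_atAlice a' b' hA'
            have hb'p : b' p = some q0 := (hb' _ _ hq02).2
            have hu1 : (ghStep a b')^[k + 1] (ghStart a) = GHState.atAlice q0 := by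
              rw [Function.iterate_succ_apply', hp]
              exact step_atBob_some a b' hb'p
            have hq0used : q0 ∈ usedPipes a b := by
              rw [hused]
              refine mem_usedPipes.mpr ⟨k'', ?_, Or.inr hq01⟩
              omega
            obtain ⟨q, hq1, hq2⟩ := haveA q0 k hu1 hq0used
            exact Or.inr (Or.inr ⟨q0, q, hu1, hq1, hq2⟩)
        | inr hB' =>
          cases hb'p : b' p with
          | none =>
            left
            rw [Function.iterate_succ_apply', hp]
            exact step_atBob_none a b' hb'p
          | some r =>
            have hu1 : (ghStep a b')^[k + 1] (ghStart a) = GHState.atAlice r := by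
              rw [Function.iterate_succ_apply', hp]
              exact step_atBob_some a b' hb'p
            have hk'lt : k' < 2 * s + 2 := by
              rcases Nat.lt_or_ge k' (2 * s + 2) with h | h
              · exact h
              · exfalso
                have hk2 : k' = 2 * s + 2 := by omega
                rw [hk2, ht'N] at hB'
                exact absurd hB' (by simp)
            have hr : (ghStep a' b')^[k' + 1] (ghStart a') = GHState.atAlice r := by
              rw [Function.iterate_succ_apply', hB']
              exact step_atBob_some a' b' hb'p
            have hrused : r ∈ usedPipes a b := by
              rw [hused]
              refine mem_usedPipes.mpr ⟨k' + 1, ?_, Or.inl hr⟩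
              omega
            obtain ⟨q, hq1, hq2⟩ := haveA r k hu1 hrused
            exact Or.inr (Or.inr ⟨r, q, hu1, hq1, hq2⟩)
      · -- u k = atAlice p with safe continuation
        right; left
        refine ⟨q, ?_, hqm⟩
        rw [Function.iterate_succ_apply', hp]
        exact step_atAlice_some a b' hq
  intro hexit
  rcases inv (2 * s + 2) with h | ⟨p, hp, _⟩ | ⟨p, q, hp, _, _⟩
  · rw [hexit] at h; exact absurd h (by simp)
  · rw [hexit] at hp; exact absurd hp (by simp)
  · rw [hexit] at hp; exact absurd hp (by simp)

end GHMain
section GHFinal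

open GHState

lemma ghgame_size_ge {n s : ℕ} (G : GHGame n s) (hG : G.Computes (EQfun n)) : n ≤ s := by
  have hinj : Function.Injective (fun x : Fin n → Bool => usedPipes (G.EA x) (G.EB x)) := by
    intro x x' hxx'
    by_contra hne
    have hEQd : EQfun n x x' = false := by simp [EQfun, hne]
    have hEQx : EQfun n x x = true := by simp [EQfun]
    have hEQx' : EQfun n x' x' = true := by simp [EQfun]
    have htN : (ghStep (G.EA x) (G.EB x))^[2 * s + 2] (ghStart (G.EA x)) = GHState.exitB := by
      have h := hG x x
      rw [hEQx] at h
      simpa [GHGame.run, ghResult] using h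
    have ht'N : (ghStep (G.EA x') (G.EB x'))^[2 * s + 2] (ghStart (G.EA x')) = GHState.exitB := by
      have h := hG x' x'
      rw [hEQx'] at h
      simpa [GHGame.run, ghResult] using h
    have huN : (ghStep (G.EA x) (G.EB x'))^[2 * s + 2] (ghStart (G.EA x)) = GHState.exitA := by
      have h := hG x x'
      rw [hEQd] at h
      simpa [GHGame.run, ghResult] using h
    exact cross_ne_exitA (G.EA x) (G.EA x') (G.EB x) (G.EB x')
      (G.matchA x) (G.matchB x') htN ht'N hxx' huN
  have hcard := Fintype.card_le_of_injective _ hinj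
  have h1 : Fintype.card (Fin n → Bool) = 2 ^ n := by simp
  have h2 : Fintype.card (Finset (Fin s)) = 2 ^ s := by simp [Fintype.card_finset]
  rw [h1, h2] at hcard
  exact (Nat.pow_le_pow_iff_right (by norm_num)).mp hcard

noncomputable def pipeEquiv (n : ℕ) : (Bool × (Fin n → Bool)) ≃ Fin (2 * 2 ^ n) :=
  Fintype.equivFinOfCardEq (by simp)

noncomputable def eqGame (n : ℕ) : GHGame n (2 * 2 ^ n) where
  EA x := fun w =>
    if w = ((pipeEquiv n) (false, x)).succ then some 0
    else if w = 0 then some ((pipeEquiv n) (false, x)).succ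
    else none
  EB y := fun p =>
    if ((pipeEquiv n).symm p).2 = y then none
    else some ((pipeEquiv n) (!((pipeEquiv n).symm p).1, ((pipeEquiv n).symm p).2))
  matchA x := by
    intro i j h
    beta_reduce at h ⊢
    by_cases h1 : i = ((pipeEquiv n) (false, x)).succ
    · rw [if_pos h1] at h
      have hj : j = 0 := by simpa using h.symm
      subst hj
      constructor
      · rw [h1]; exact Fin.succ_ne_zero _
      · rw [if_neg (Ne.symm (Fin.succ_ne_zero _)), if_pos rfl, h1]
    · rw [if_neg h1] at h
      by_cases h2 : i = 0
      · rw [if_pos h2] at h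
        have hj : j = ((pipeEquiv n) (false, x)).succ := by simpa using h.symm
        subst hj
        constructor
        · rw [h2]; exact (Fin.succ_ne_zero _).symm
        · rw [if_pos rfl, h2]
      · rw [if_neg h2] at h
        exact absurd h (by simp)
  matchB y := by
    intro i j h
    beta_reduce at h ⊢
    by_cases h1 : ((pipeEquiv n).symm i).2 = y
    · rw [if_pos h1] at h; exact absurd h (by simp)
    · rw [if_neg h1] at h
      have hj : j = (pipeEquiv n) (!((pipeEquiv n).symm i).1, ((pipeEquiv n).symm i).2) := by
        simpa using h.symm
      have hsymmj : (pipeEquiv n).symm j = (!((pipeEquiv n).symm i).1, ((pipeEquiv n).symm i).2) := by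
        rw [hj, Equiv.symm_apply_apply]
      constructor
      · intro hij
        rw [← hij] at hsymmj
        have : ((pipeEquiv n).symm i).1 = !((pipeEquiv n).symm i).1 := by
          conv_lhs => rw [hsymmj]
        simp at this
      · rw [if_neg (by rw [hsymmj]; exact h1), hsymmj]
        simp

end GHFinal
section GHWrap

open GHState

lemma eqGame_EA_zero (n : ℕ) (x : Fin n → Bool) :
    (eqGame n).EA x 0 = some ((pipeEquiv n) (false, x)).succ := by
  show (if (0 : Fin (2 * 2 ^ n + 1)) = ((pipeEquiv n) (false, x)).succ then some 0
    else if (0 : Fin (2 * 2 ^ n + 1)) = 0 then some ((pipeEquiv n) (false, x)).succ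
    else none) = some ((pipeEquiv n) (false, x)).succ
  rw [if_neg (Ne.symm (Fin.succ_ne_zero _)), if_pos rfl]

lemma eqGame_computes (n : ℕ) : (eqGame n).Computes (EQfun n) := by
  intro x y
  have h0 : ghStart ((eqGame n).EA x) = GHState.atBob ((pipeEquiv n) (false, x)) :=
    ghStart_some _ (eqGame_EA_zero n x)
  show ghResult ((eqGame n).EA x) ((eqGame n).EB y) = _
  unfold ghResult
  by_cases hxy : x = y
  · subst hxy
    have hEB : (eqGame n).EB x ((pipeEquiv n) (false, x)) = none := by
      show (if ((pipeEquiv n).symm ((pipeEquiv n) (false, x))).2 = x then none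
        else some ((pipeEquiv n) (!((pipeEquiv n).symm ((pipeEquiv n) (false, x))).1,
          ((pipeEquiv n).symm ((pipeEquiv n) (false, x))).2))) = none
      rw [if_pos (by simp)]
    have h1 : ghStep ((eqGame n).EA x) ((eqGame n).EB x)
        (GHState.atBob ((pipeEquiv n) (false, x))) = GHState.exitB :=
      step_atBob_none _ _ hEB
    have hEQ : EQfun n x x = true := by simp [EQfun]
    rw [hEQ]
    have e1 : 2 * (2 * 2 ^ n) + 2 = (2 * (2 * 2 ^ n) + 1) + 1 := by omega
    rw [e1, Function.iterate_succ_apply, h0, h1, iterate_exitB]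
    simp
  · have hEB : (eqGame n).EB y ((pipeEquiv n) (false, x)) =
        some ((pipeEquiv n) (true, x)) := by
      show (if ((pipeEquiv n).symm ((pipeEquiv n) (false, x))).2 = y then none
        else some ((pipeEquiv n) (!((pipeEquiv n).symm ((pipeEquiv n) (false, x))).1,
          ((pipeEquiv n).symm ((pipeEquiv n) (false, x))).2)))
        = some ((pipeEquiv n) (true, x))
      rw [if_neg (by simpa using hxy)]
      simp
    have h1 : ghStep ((eqGame n).EA x) ((eqGame n).EB y)
        (GHState.atBob ((pipeEquiv n) (false, x))) =
        GHState.atAlice ((pipeEquiv n) (true, x)) :=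
      step_atBob_some _ _ hEB
    have hEA2 : (eqGame n).EA x ((pipeEquiv n) (true, x)).succ = none := by
      show (if ((pipeEquiv n) (true, x)).succ = ((pipeEquiv n) (false, x)).succ then some 0
        else if ((pipeEquiv n) (true, x)).succ = 0 then some ((pipeEquiv n) (false, x)).succ
        else none) = none
      rw [if_neg, if_neg (Fin.succ_ne_zero _)]
      intro hcontra
      have := (pipeEquiv n).injective (Fin.succ_injective _ hcontra)
      simp at this
    have h2 : ghStep ((eqGame n).EA x) ((eqGame n).EB y)
        (GHState.atAlice ((pipeEquiv n) (true, x))) = GHState.exitA :=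
      step_atAlice_none _ _ hEA2
    have hEQ : EQfun n x y = false := by simp [EQfun, hxy]
    rw [hEQ]
    have e1 : 2 * (2 * 2 ^ n) + 2 = (2 * (2 * 2 ^ n)) + 1 + 1 := by omega
    rw [e1, Function.iterate_succ_apply, Function.iterate_succ_apply, h0, h1, h2, iterate_exitA]
    simp

end GHWrap

/-- The equality function has garden-hose complexity at least `n`:
`GH(EQ) ≥ n`. -/
theorem gh_eq_ge_n (n : ℕ) : n ≤ GH (EQfun n) := by
  unfold GH
  refine le_csInf ⟨2 * 2 ^ n, eqGame n, eqGame_computes n⟩ ?_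
  rintro s ⟨G, hG⟩
  exact ghgame_size_ge G hG
end

section
/- Let H = H_R ⊗ H_A ⊗ H_Ã ⊗ H_B ⊗ H_B̃ where H_R = H_A = H_B = ℂ² and H_Ã, H_B̃ are finite-dimensional complex Hilbert spaces, and let β denote the EPR state (|00⟩ + |11⟩)/√2 ∈ ℂ² ⊗ ℂ². Suppose |ψ⁰⟩, |ψ¹⟩ ∈ H are unit vectors, U is a unitary on H_A ⊗ H_Ã (acting as the identity on the other factors), and V is a unitary on H_B ⊗ H_B̃ (acting as the identity on the other factors), such that U|ψ⁰⟩ = β_{RA} ⊗ |P⟩ for some unit vector |P⟩ ∈ H_Ã ⊗ H_B ⊗ H_B̃ (β placed in the R and A registers) and V|ψ¹⟩ = β_{RB} ⊗ |Q⟩ for some unit vector |Q⟩ ∈ H_A ⊗ H_Ã ⊗ H_B̃ (β placed in the R and B registers). Then |⟨ψ⁰|ψ¹⟩| ≤ 1/2. -/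
/-- The index set of the five-register Hilbert space
`H_R ⊗ H_A ⊗ H_Ã ⊗ H_B ⊗ H_B̃`, where `H_R = H_A = H_B = ℂ²` are qubit
registers and `H_Ã = ℂ^a`, `H_B̃ = ℂ^b` are arbitrary finite-dimensional
registers. -/
abbrev QIdx (a b : ℕ) := Fin 2 × Fin 2 × Fin a × Fin 2 × Fin b

/-- The amplitude of the EPR state `(|00⟩ + |11⟩)/√2` at basis index `(i, j)`. -/
noncomputable def eprAmp (i j : Fin 2) : ℂ :=
  if i = j then ((1 / Real.sqrt 2 : ℝ) : ℂ) else 0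

/-- The action (in coordinates) of a matrix `u` on the registers `A ⊗ Ã`,
extended by the identity on the remaining registers `R`, `B`, `B̃`. -/
noncomputable def applyA {a b : ℕ}
    (u : Matrix (Fin 2 × Fin a) (Fin 2 × Fin a) ℂ)
    (ψ : EuclideanSpace ℂ (QIdx a b)) (v : QIdx a b) : ℂ :=
  ∑ p : Fin 2 × Fin a,
    u (v.2.1, v.2.2.1) p * ψ (v.1, p.1, p.2, v.2.2.2.1, v.2.2.2.2)

/-- The action (in coordinates) of a matrix `u` on the registers `B ⊗ B̃`,
extended by the identity on the remaining registers `R`, `A`, `Ã`. -/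
noncomputable def applyB {a b : ℕ}
    (u : Matrix (Fin 2 × Fin b) (Fin 2 × Fin b) ℂ)
    (ψ : EuclideanSpace ℂ (QIdx a b)) (v : QIdx a b) : ℂ :=
  ∑ p : Fin 2 × Fin b,
    u (v.2.2.2.1, v.2.2.2.2) p * ψ (v.1, v.2.1, v.2.2.1, p.1, p.2)

/-!
Since `U` and `V` act on disjoint registers they commute, so
`⟨ψ⁰, ψ¹⟩ = ⟨V U ψ⁰, U V ψ¹⟩ = ⟨β_RA ⊗ V P, β_RB ⊗ U Q⟩`. Pairing an EPR pair on `R, A` with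
one on `R, B` keeps only the terms with `R = A = B`, each weighted by `(1/√2)² = 1/2`, so the
inner product is `½ ⟨V P, U Q⟩` up to a relabelling of registers, and Cauchy–Schwarz with
`‖V P‖ = ‖U Q‖ = 1` gives the bound.
-/

open scoped InnerProductSpace

namespace Matrix

variable {R 𝕜 ι κ c n : Type*} [Fintype n] [DecidableEq n]

theorem mulVec_dotProduct_star_mulVec [CommRing R] [StarRing R] {M : Matrix n n R}
    (hM : M ∈ unitaryGroup n R) (x y : n → R) :
    M *ᵥ y ⬝ᵥ star (M *ᵥ x) = y ⬝ᵥ star x := by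
  rw [star_mulVec, dotProduct_comm, dotProduct_mulVec, vecMul_vecMul, ← star_eq_conjTranspose,
    mem_unitaryGroup_iff'.mp hM, vecMul_one, dotProduct_comm]

/-- `M` acting on the `n`-factor of `c × n`; the input and output index sets are identified
with `c × n` by `f` and `e`. -/
def mulVecFactor [Semiring R] (M : Matrix n n R) (e : ι ≃ c × n) (f : κ ≃ c × n) (x : κ → R) :
    ι → R :=
  fun i => (M *ᵥ fun p => x (f.symm ((e i).1, p))) (e i).2

variable [Fintype ι] [Fintype κ] [Fintype c]

theorem mulVecFactor_dotProduct_star [CommRing R] [StarRing R] {M : Matrix n n R}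
    (hM : M ∈ unitaryGroup n R) (e : ι ≃ c × n) (f : κ ≃ c × n) (x y : κ → R) :
    M.mulVecFactor e f y ⬝ᵥ star (M.mulVecFactor e f x) = y ⬝ᵥ star x := by
  simp only [dotProduct]
  rw [← e.symm.sum_comp, ← f.symm.sum_comp, Fintype.sum_prod_type, Fintype.sum_prod_type]
  refine Finset.sum_congr rfl fun k _ => ?_
  simpa [mulVecFactor, dotProduct] using mulVec_dotProduct_star_mulVec hM
    (fun p => x (f.symm (k, p))) (fun p => y (f.symm (k, p)))

variable [RCLike 𝕜]

theorem inner_toLp_mulVecFactor {M : Matrix n n 𝕜} (hM : M ∈ unitaryGroup n 𝕜)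
    (e : ι ≃ c × n) (f : κ ≃ c × n) (x y : κ → 𝕜) :
    ⟪WithLp.toLp 2 (M.mulVecFactor e f x), WithLp.toLp 2 (M.mulVecFactor e f y)⟫_𝕜 =
      ⟪WithLp.toLp 2 x, WithLp.toLp 2 y⟫_𝕜 :=
  mulVecFactor_dotProduct_star hM e f x y

theorem norm_toLp_mulVecFactor {M : Matrix n n 𝕜} (hM : M ∈ unitaryGroup n 𝕜)
    (e : ι ≃ c × n) (f : κ ≃ c × n) (x : κ → 𝕜) :
    ‖WithLp.toLp 2 (M.mulVecFactor e f x)‖ = ‖WithLp.toLp 2 x‖ := by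
  rw [norm_eq_sqrt_re_inner (𝕜 := 𝕜), norm_eq_sqrt_re_inner (𝕜 := 𝕜),
    inner_toLp_mulVecFactor hM]

end Matrix

def Equiv.prodLeftComm (α β γ : Type*) : α × β × γ ≃ β × α × γ where
  toFun p := (p.2.1, p.1, p.2.2)
  invFun p := (p.2.1, p.1, p.2.2)
  left_inv _ := rfl
  right_inv _ := rfl

def QIdx.equivA (a b : ℕ) : QIdx a b ≃ (Fin 2 × Fin 2 × Fin b) × (Fin 2 × Fin a) where
  toFun v := ((v.1, v.2.2.2.1, v.2.2.2.2), (v.2.1, v.2.2.1))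
  invFun w := (w.1.1, w.2.1, w.2.2, w.1.2.1, w.1.2.2)
  left_inv _ := rfl
  right_inv _ := rfl

def QIdx.equivB (a b : ℕ) : QIdx a b ≃ (Fin 2 × Fin 2 × Fin a) × (Fin 2 × Fin b) where
  toFun v := ((v.1, v.2.1, v.2.2.1), (v.2.2.2.1, v.2.2.2.2))
  invFun w := (w.1.1, w.1.2.1, w.1.2.2, w.2.1, w.2.2)
  left_inv _ := rfl
  right_inv _ := rfl

def QIdx.equivEPR (a b : ℕ) : QIdx a b ≃ (Fin 2 × Fin a × Fin b) × (Fin 2 × Fin 2) where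
  toFun v := ((v.1, v.2.2.1, v.2.2.2.2), (v.2.1, v.2.2.2.1))
  invFun w := (w.1.1, w.2.1, w.1.2.1, w.2.2, w.1.2.2)
  left_inv _ := rfl
  right_inv _ := rfl

section

variable {a b : ℕ}

theorem applyA_eq_mulVecFactor (U : Matrix (Fin 2 × Fin a) (Fin 2 × Fin a) ℂ)
    (ψ : EuclideanSpace ℂ (QIdx a b)) :
    applyA U ψ = U.mulVecFactor (QIdx.equivA a b) (QIdx.equivA a b) (WithLp.ofLp ψ) := by
  ext; rfl

theorem applyB_eq_mulVecFactor (V : Matrix (Fin 2 × Fin b) (Fin 2 × Fin b) ℂ)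
    (ψ : EuclideanSpace ℂ (QIdx a b)) :
    applyB V ψ = V.mulVecFactor (QIdx.equivB a b) (QIdx.equivB a b) (WithLp.ofLp ψ) := by
  ext; rfl

theorem inner_applyA_applyA {U : Matrix (Fin 2 × Fin a) (Fin 2 × Fin a) ℂ}
    (hU : U ∈ Matrix.unitaryGroup (Fin 2 × Fin a) ℂ) (x y : EuclideanSpace ℂ (QIdx a b)) :
    ⟪WithLp.toLp 2 (applyA U x), WithLp.toLp 2 (applyA U y)⟫_ℂ = ⟪x, y⟫_ℂ := by
  rw [applyA_eq_mulVecFactor, applyA_eq_mulVecFactor]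
  exact Matrix.inner_toLp_mulVecFactor hU _ _ _ _

theorem inner_applyB_applyB {V : Matrix (Fin 2 × Fin b) (Fin 2 × Fin b) ℂ}
    (hV : V ∈ Matrix.unitaryGroup (Fin 2 × Fin b) ℂ) (x y : EuclideanSpace ℂ (QIdx a b)) :
    ⟪WithLp.toLp 2 (applyB V x), WithLp.toLp 2 (applyB V y)⟫_ℂ = ⟪x, y⟫_ℂ := by
  rw [applyB_eq_mulVecFactor, applyB_eq_mulVecFactor]
  exact Matrix.inner_toLp_mulVecFactor hV _ _ _ _

theorem applyB_applyA_comm (U : Matrix (Fin 2 × Fin a) (Fin 2 × Fin a) ℂ)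
    (V : Matrix (Fin 2 × Fin b) (Fin 2 × Fin b) ℂ) (ψ : EuclideanSpace ℂ (QIdx a b)) :
    applyB V (WithLp.toLp 2 (applyA U ψ)) = applyA U (WithLp.toLp 2 (applyB V ψ)) := by
  funext v
  simp only [applyA, applyB, Finset.mul_sum]
  rw [Finset.sum_comm]
  exact Finset.sum_congr rfl fun p _ => Finset.sum_congr rfl fun q _ => by ring

theorem applyB_of_eq_mul {V : Matrix (Fin 2 × Fin b) (Fin 2 × Fin b) ℂ}
    {ψ : EuclideanSpace ℂ (QIdx a b)} {k : Fin 2 → Fin 2 → ℂ} {P : Fin a × Fin 2 × Fin b → ℂ}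
    (h : ∀ r A ta B tb, ψ (r, A, ta, B, tb) = k r A * P (ta, B, tb)) (r A ta B tb) :
    applyB V ψ (r, A, ta, B, tb) =
      k r A * V.mulVecFactor (Equiv.prodLeftComm _ _ _) (Equiv.refl _) P (B, ta, tb) := by
  simp [applyB, h, Matrix.mulVecFactor, Matrix.mulVec, dotProduct, Finset.mul_sum,
    Equiv.prodLeftComm, mul_left_comm]

theorem applyA_of_eq_mul {U : Matrix (Fin 2 × Fin a) (Fin 2 × Fin a) ℂ}
    {ψ : EuclideanSpace ℂ (QIdx a b)} {k : Fin 2 → Fin 2 → ℂ} {Q : Fin 2 × Fin a × Fin b → ℂ}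
    (h : ∀ r A ta B tb, ψ (r, A, ta, B, tb) = k r B * Q (A, ta, tb)) (r A ta B tb) :
    applyA U ψ (r, A, ta, B, tb) = k r B * U.mulVecFactor
      ((Equiv.prodAssoc _ _ _).symm.trans (Equiv.prodComm _ _))
      ((Equiv.prodAssoc _ _ _).symm.trans (Equiv.prodComm _ _)) Q (A, ta, tb) := by
  simp [applyA, h, Matrix.mulVecFactor, Matrix.mulVec, dotProduct, Finset.mul_sum,
    mul_left_comm]


theorem inner_eq_half_inner_of_eprAmp {f g : QIdx a b → ℂ}
    {X Y : Fin 2 × Fin a × Fin b → ℂ}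
    (hf : ∀ r A ta B tb, f (r, A, ta, B, tb) = eprAmp r A * X (B, ta, tb))
    (hg : ∀ r A ta B tb, g (r, A, ta, B, tb) = eprAmp r B * Y (A, ta, tb)) :
    ⟪WithLp.toLp 2 f, WithLp.toLp 2 g⟫_ℂ = (1 / 2 : ℂ) * ⟪WithLp.toLp 2 X, WithLp.toLp 2 Y⟫_ℂ := by
  simp only [EuclideanSpace.inner_toLp_toLp, dotProduct, Finset.mul_sum]
  rw [← (QIdx.equivEPR a b).symm.sum_comp, Fintype.sum_prod_type]
  refine Finset.sum_congr rfl fun ⟨r, ta, tb⟩ _ => ?_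
  have hsqrt : (Real.sqrt 2 : ℂ)⁻¹ * (Real.sqrt 2 : ℂ)⁻¹ = 2⁻¹ := by
    rw [← mul_inv, ← Complex.ofReal_mul, Real.mul_self_sqrt zero_le_two]
    norm_num
  simp [Fintype.sum_prod_type, QIdx.equivEPR, hf, hg, eprAmp, apply_ite (starRingEnd ℂ),
    mul_mul_mul_comm _ (Y _), hsqrt]

end

theorem abs_inner_le_half_of_localized_general (a b : ℕ)
    (ψ0 ψ1 : EuclideanSpace ℂ (QIdx a b))
    (U : Matrix (Fin 2 × Fin a) (Fin 2 × Fin a) ℂ)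
    (hU : U ∈ Matrix.unitaryGroup (Fin 2 × Fin a) ℂ)
    (V : Matrix (Fin 2 × Fin b) (Fin 2 × Fin b) ℂ)
    (hV : V ∈ Matrix.unitaryGroup (Fin 2 × Fin b) ℂ)
    (P : EuclideanSpace ℂ (Fin a × Fin 2 × Fin b)) (hP : ‖P‖ = 1)
    (Q : EuclideanSpace ℂ (Fin 2 × Fin a × Fin b)) (hQ : ‖Q‖ = 1)
    (h0 : ∀ (r A : Fin 2) (ta : Fin a) (B : Fin 2) (tb : Fin b),
      applyA U ψ0 (r, A, ta, B, tb) = eprAmp r A * P (ta, B, tb))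
    (h1 : ∀ (r A : Fin 2) (ta : Fin a) (B : Fin 2) (tb : Fin b),
      applyB V ψ1 (r, A, ta, B, tb) = eprAmp r B * Q (A, ta, tb)) :
    ‖(inner ℂ ψ0 ψ1 : ℂ)‖ ≤ 1 / 2 := by
  set X := V.mulVecFactor (Equiv.prodLeftComm _ _ _) (Equiv.refl _) P
  set Y := U.mulVecFactor ((Equiv.prodAssoc _ _ _).symm.trans (Equiv.prodComm _ _))
    ((Equiv.prodAssoc _ _ _).symm.trans (Equiv.prodComm _ _)) Q
  have hX : ‖WithLp.toLp 2 X‖ = 1 := (Matrix.norm_toLp_mulVecFactor hV _ _ _).trans hP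
  have hY : ‖WithLp.toLp 2 Y‖ = 1 := (Matrix.norm_toLp_mulVecFactor hU _ _ _).trans hQ
  have hinner : ⟪ψ0, ψ1⟫_ℂ = (1 / 2 : ℂ) * ⟪WithLp.toLp 2 X, WithLp.toLp 2 Y⟫_ℂ := by
    rw [← inner_applyA_applyA hU, ← inner_applyB_applyB hV, applyB_applyA_comm U V ψ1]
    exact inner_eq_half_inner_of_eprAmp (applyB_of_eq_mul h0) (applyA_of_eq_mul h1)
  calc ‖⟪ψ0, ψ1⟫_ℂ‖ = 1 / 2 * ‖⟪WithLp.toLp 2 X, WithLp.toLp 2 Y⟫_ℂ‖ := by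
        rw [hinner, norm_mul]; norm_num
    _ ≤ 1 / 2 * (‖WithLp.toLp 2 X‖ * ‖WithLp.toLp 2 Y‖) := by
        gcongr; exact norm_inner_le_norm _ _
    _ = 1 / 2 := by rw [hX, hY, mul_one, mul_one]

/-- If a local unitary `U` on `A ⊗ Ã` maps `ψ⁰` to an EPR pair in registers
`R, A` tensored with a unit vector `P` of `Ã ⊗ B ⊗ B̃`, and a local unitary `V`
on `B ⊗ B̃` maps `ψ¹` to an EPR pair in registers `R, B` tensored with a unit
vector `Q` of `A ⊗ Ã ⊗ B̃`, then `|⟨ψ⁰|ψ¹⟩| ≤ 1/2`. -/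
theorem abs_inner_le_half_of_localized (a b : ℕ)
    (ψ0 ψ1 : EuclideanSpace ℂ (QIdx a b))
    (hψ0 : ‖ψ0‖ = 1) (hψ1 : ‖ψ1‖ = 1)
    (U : Matrix (Fin 2 × Fin a) (Fin 2 × Fin a) ℂ)
    (hU : U ∈ Matrix.unitaryGroup (Fin 2 × Fin a) ℂ)
    (V : Matrix (Fin 2 × Fin b) (Fin 2 × Fin b) ℂ)
    (hV : V ∈ Matrix.unitaryGroup (Fin 2 × Fin b) ℂ)
    (P : EuclideanSpace ℂ (Fin a × Fin 2 × Fin b)) (hP : ‖P‖ = 1)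
    (Q : EuclideanSpace ℂ (Fin 2 × Fin a × Fin b)) (hQ : ‖Q‖ = 1)
    (h0 : ∀ (r A : Fin 2) (ta : Fin a) (B : Fin 2) (tb : Fin b),
      applyA U ψ0 (r, A, ta, B, tb) = eprAmp r A * P (ta, B, tb))
    (h1 : ∀ (r A : Fin 2) (ta : Fin a) (B : Fin 2) (tb : Fin b),
      applyB V ψ1 (r, A, ta, B, tb) = eprAmp r B * Q (A, ta, tb)) :
    ‖(inner ℂ ψ0 ψ1 : ℂ)‖ ≤ 1 / 2 :=
  abs_inner_le_half_of_localized_general a b ψ0 ψ1 U hU V hV P hP Q hQ h0 h1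
end
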